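/- Let 0 < γ < 1 and let μ be a Borel probability measure on [0,1] such that c ↦ ∫_{[0,1]} |x−c|^γ dμ(x) is constant for c ∈ [0,1]. Then μ maximizes E_{X,X' iid ∼ ν} |X−X'|^γ = ∫∫ |x−x'|^γ dν(x) dν(x') over all Borel probability measures ν on [0,1]. -/

import Mathlib

/-!
For `0 < γ < 1` and `r ≥ 0`, `r ^ γ` is a positive multiple of `∫₀^∞ (1 - e^{-sr}) s^{-1-γ} ds`,
and every kernel `e^{-s|x-y|}` with `s ≥ 0` is positive definite, being
`∫₀^∞ φ_u(x) φ_u(y) du` with `φ_u(x) = e^{-sx} 1[u < e^{2sx}]`. Hence the energy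
`E(ν, μ) = ∫∫ |x-y|^γ dμ dν` of probability measures satisfies `E(ν,ν) + E(μ,μ) ≤ 2 E(ν,μ)`.
If `c ↦ ∫ |x-c|^γ dμ(x)` equals `K` on `[0,1]`, then `E(ν,μ) = E(μ,μ) = K` for every `ν`
on `[0,1]`, so `E(ν,ν) ≤ K`.
-/

open MeasureTheory Set Function Real
open scoped ENNReal

theorem ENNReal.two_mul_mul_le_add_sq (a b : ℝ≥0∞) : 2 * (a * b) ≤ a ^ 2 + b ^ 2 := by
  wlog hab : a ≤ b generalizing a b
  · simpa [mul_comm, add_comm] using this b a (le_of_not_ge hab)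
  obtain ⟨d, rfl⟩ := exists_add_of_le hab
  calc 2 * (a * (a + d)) = a ^ 2 + (a ^ 2 + 2 * a * d) := by ring
    _ ≤ a ^ 2 + (a ^ 2 + 2 * a * d + d ^ 2) := by gcongr a ^ 2 + ?_; exact le_self_add
    _ = a ^ 2 + (a + d) ^ 2 := by ring

theorem ENNReal.add_le_two_mul_of_add_eq_one {a a' b b' c c' : ℝ≥0∞} (ha : a + a' = 1)
    (hb : b + b' = 1) (hc : c + c' = 1) (h : 2 * c' ≤ a' + b') : a + b ≤ 2 * c := by
  have hfin : a' + b' ≠ ∞ := by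
    refine ne_top_of_le_ne_top (b := 1 + 1) (by simp) (add_le_add ?_ ?_)
    · exact ha ▸ le_add_self
    · exact hb ▸ le_add_self
  refine (ENNReal.add_le_add_iff_right hfin).1 ?_
  calc a + b + (a' + b') = 2 * (c + c') := by rw [add_add_add_comm, ha, hb, hc]; norm_num
    _ = 2 * c + 2 * c' := mul_add _ _ _
    _ ≤ 2 * c + (a' + b') := by gcongr

namespace RieszEnergy

section PairLIntegral

variable {X T : Type*} [MeasurableSpace X] [MeasurableSpace T]

noncomputable def pairLIntegral (k : X → X → ℝ≥0∞) (ν μ : Measure X) : ℝ≥0∞ :=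
  ∫⁻ x, ∫⁻ y, k x y ∂μ ∂ν

theorem pairLIntegral_const (c : ℝ≥0∞) (ν μ : Measure X) [IsProbabilityMeasure ν]
    [IsProbabilityMeasure μ] : pairLIntegral (fun _ _ => c) ν μ = c := by
  simp [pairLIntegral]

theorem pairLIntegral_add {k₁ k₂ : X → X → ℝ≥0∞} (h₁ : Measurable (uncurry k₁))
    (ν μ : Measure X) [SFinite μ] :
    pairLIntegral (fun x y => k₁ x y + k₂ x y) ν μ =
      pairLIntegral k₁ ν μ + pairLIntegral k₂ ν μ := by
  have hm : Measurable fun x => ∫⁻ y, k₁ x y ∂μ := h₁.lintegral_prod_right'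
  simp only [pairLIntegral]
  rw [← lintegral_add_left hm]
  exact lintegral_congr fun x => lintegral_add_left (h₁.comp measurable_prodMk_left) _

theorem pairLIntegral_const_mul (k : X → X → ℝ≥0∞) {c : ℝ≥0∞} (hc : c ≠ ∞) (ν μ : Measure X) :
    pairLIntegral (fun x y => c * k x y) ν μ = c * pairLIntegral k ν μ := by
  simp only [pairLIntegral]
  rw [← lintegral_const_mul' _ _ hc]
  exact lintegral_congr fun x => lintegral_const_mul' _ _ hc

theorem pairLIntegral_mul_const (k : X → X → ℝ≥0∞) {c : ℝ≥0∞} (hc : c ≠ ∞) (ν μ : Measure X) :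
    pairLIntegral k ν μ * c = pairLIntegral (fun x y => k x y * c) ν μ := by
  simpa only [mul_comm _ c] using (pairLIntegral_const_mul k hc ν μ).symm

theorem pairLIntegral_mul {f g : X → ℝ≥0∞} (hf : Measurable f) (hg : Measurable g)
    (ν μ : Measure X) :
    pairLIntegral (fun x y => f x * g y) ν μ = (∫⁻ x, f x ∂ν) * ∫⁻ y, g y ∂μ := by
  simp only [pairLIntegral, lintegral_const_mul _ hg]
  exact lintegral_mul_const _ hf

theorem pairLIntegral_lintegral {h : T → X → X → ℝ≥0∞}
    (hh : Measurable fun p : T × X × X => h p.1 p.2.1 p.2.2) (τ : Measure T) (ν μ : Measure X)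
    [SFinite τ] [SFinite ν] [SFinite μ] :
    pairLIntegral (fun x y => ∫⁻ t, h t x y ∂τ) ν μ = ∫⁻ t, pairLIntegral (h t) ν μ ∂τ := by
  simp only [pairLIntegral]
  have hinner : ∀ x, ∫⁻ y, ∫⁻ t, h t x y ∂τ ∂μ = ∫⁻ t, ∫⁻ y, h t x y ∂μ ∂τ := fun x =>
    lintegral_lintegral_swap
      (hh.comp (f := fun p : X × T => (p.2, x, p.1)) (by fun_prop)).aemeasurable
  simp_rw [hinner]
  exact lintegral_lintegral_swap (Measurable.aemeasurable <|
    (hh.comp (f := fun p : (X × T) × X => (p.1.2, p.1.1, p.2)) (by fun_prop)).lintegral_prod_right')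

theorem measurable_pairLIntegral {h : T → X → X → ℝ≥0∞}
    (hh : Measurable fun p : T × X × X => h p.1 p.2.1 p.2.2) (ν μ : Measure X) [SFinite ν]
    [SFinite μ] : Measurable fun t => pairLIntegral (h t) ν μ :=
  (hh.comp (f := fun p : (T × X) × X => (p.1.1, p.1.2, p.2))
    (by fun_prop)).lintegral_prod_right'.lintegral_prod_right'

theorem integral_integral_eq_toReal_pairLIntegral {f : X → X → ℝ} (hf : Measurable (uncurry f))
    (hf₀ : ∀ x y, 0 ≤ f x y) {ν μ : Measure X} [SFinite μ]
    (hfin : ∀ᵐ x ∂ν, ∫⁻ y, ENNReal.ofReal (f x y) ∂μ < ∞) :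
    ∫ x, ∫ y, f x y ∂μ ∂ν = (pairLIntegral (fun x y => ENNReal.ofReal (f x y)) ν μ).toReal := by
  have hinner : ∀ x, ∫ y, f x y ∂μ = (∫⁻ y, ENNReal.ofReal (f x y) ∂μ).toReal := fun x =>
    integral_eq_lintegral_of_nonneg_ae (Filter.Eventually.of_forall (hf₀ x))
      (hf.comp measurable_prodMk_left).aestronglyMeasurable
  simp_rw [hinner]
  exact integral_toReal hf.ennreal_ofReal.lintegral_prod_right'.aemeasurable hfin

theorem two_mul_pairLIntegral_le {k : X → X → ℝ≥0∞} {f : T → X → ℝ≥0∞} {τ : Measure T}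
    [SFinite τ] (hf : Measurable (uncurry f)) (hk : ∀ x y, k x y = ∫⁻ t, f t x * f t y ∂τ)
    (ν μ : Measure X) [SFinite ν] [SFinite μ] :
    2 * pairLIntegral k ν μ ≤ pairLIntegral k ν ν + pairLIntegral k μ μ := by
  have hmul : ∀ ρ₁ ρ₂ : Measure X, [SFinite ρ₁] → [SFinite ρ₂] →
      pairLIntegral k ρ₁ ρ₂ = ∫⁻ t, (∫⁻ x, f t x ∂ρ₁) * ∫⁻ y, f t y ∂ρ₂ ∂τ := by
    intro ρ₁ ρ₂ _ _
    rw [show k = _ from funext₂ hk, pairLIntegral_lintegral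
      ((hf.comp (f := fun p : T × X × X => (p.1, p.2.1)) (by fun_prop)).mul
        (hf.comp (f := fun p : T × X × X => (p.1, p.2.2)) (by fun_prop))) τ ρ₁ ρ₂]
    exact lintegral_congr fun t => pairLIntegral_mul (hf.comp measurable_prodMk_left)
      (hf.comp measurable_prodMk_left) ρ₁ ρ₂
  rw [hmul, hmul, hmul, ← lintegral_const_mul' _ _ (by norm_num), ← lintegral_add_left]
  · refine lintegral_mono fun t => ?_
    simpa only [sq] using ENNReal.two_mul_mul_le_add_sq _ _
  · exact (hf.lintegral_prod_right' (ν := ν)).mul hf.lintegral_prod_right'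

end PairLIntegral

theorem ofReal_exp_neg_abs_sub (a b : ℝ) :
    ENNReal.ofReal (exp (-|a - b|)) = ∫⁻ u in Ioi 0,
      (if u < exp (2 * a) then ENNReal.ofReal (exp (-a)) else 0) *
        (if u < exp (2 * b) then ENNReal.ofReal (exp (-b)) else 0) := by
  have hprod : ∀ u, ((if u < exp (2 * a) then ENNReal.ofReal (exp (-a)) else 0) *
      if u < exp (2 * b) then ENNReal.ofReal (exp (-b)) else 0) =
      (Iio (min (exp (2 * a)) (exp (2 * b)))).indicator
        (fun _ => ENNReal.ofReal (exp (-a) * exp (-b))) u := by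
    intro u
    simp only [indicator, mem_Iio, lt_min_iff, ENNReal.ofReal_mul (exp_pos _).le]
    split_ifs <;> simp_all
  simp_rw [hprod]
  rw [lintegral_indicator_const measurableSet_Iio, Measure.restrict_apply measurableSet_Iio,
    Iio_inter_Ioi, Real.volume_Ioo, sub_zero, ← ENNReal.ofReal_mul (by positivity)]
  congr 1
  rcases le_total a b with h | h
  · rw [min_eq_left (exp_le_exp.2 (by linarith)), abs_of_nonpos (by linarith), ← exp_add,
      ← exp_add]
    ring_nf
  · rw [min_eq_right (exp_le_exp.2 (by linarith)), abs_of_nonneg (by linarith), ← exp_add,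
      ← exp_add]
    ring_nf

theorem two_mul_pairLIntegral_exp_le {s : ℝ} (hs : 0 ≤ s) (ν μ : Measure ℝ) [SFinite ν]
    [SFinite μ] :
    2 * pairLIntegral (fun x y => ENNReal.ofReal (exp (-(s * |x - y|)))) ν μ ≤
      pairLIntegral (fun x y => ENNReal.ofReal (exp (-(s * |x - y|)))) ν ν +
        pairLIntegral (fun x y => ENNReal.ofReal (exp (-(s * |x - y|)))) μ μ := by
  refine two_mul_pairLIntegral_le (τ := volume.restrict (Ioi 0))
    (f := fun u x => if u < exp (2 * (s * x)) then ENNReal.ofReal (exp (-(s * x))) else 0)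
    (Measurable.ite (measurableSet_lt (by fun_prop) (by fun_prop)) (by fun_prop)
      measurable_const) (fun x y => ?_) ν μ
  rw [← ofReal_exp_neg_abs_sub, ← mul_sub, abs_mul, abs_of_nonneg hs]

theorem pairLIntegral_one_sub_exp_add_le {s : ℝ} (hs : 0 ≤ s) (ν μ : Measure ℝ)
    [IsProbabilityMeasure ν] [IsProbabilityMeasure μ] :
    pairLIntegral (fun x y => ENNReal.ofReal (1 - exp (-(s * |x - y|)))) ν ν +
        pairLIntegral (fun x y => ENNReal.ofReal (1 - exp (-(s * |x - y|)))) μ μ ≤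
      2 * pairLIntegral (fun x y => ENNReal.ofReal (1 - exp (-(s * |x - y|)))) ν μ := by
  have hsum : ∀ (ρ₁ ρ₂ : Measure ℝ) [IsProbabilityMeasure ρ₁] [IsProbabilityMeasure ρ₂],
      pairLIntegral (fun x y => ENNReal.ofReal (1 - exp (-(s * |x - y|)))) ρ₁ ρ₂ +
        pairLIntegral (fun x y => ENNReal.ofReal (exp (-(s * |x - y|)))) ρ₁ ρ₂ = 1 := by
    intro ρ₁ ρ₂ _ _
    rw [← pairLIntegral_add (by fun_prop), ← pairLIntegral_const 1 ρ₁ ρ₂]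
    congr 1
    funext x y
    have hle : exp (-(s * |x - y|)) ≤ 1 :=
      exp_le_one_iff.2 (neg_nonpos.2 (mul_nonneg hs (abs_nonneg _)))
    rw [← ENNReal.ofReal_add (sub_nonneg.2 hle) (exp_pos _).le, sub_add_cancel, ENNReal.ofReal_one]
  exact ENNReal.add_le_two_mul_of_add_eq_one (hsum ν ν) (hsum μ μ) (hsum ν μ)
    (two_mul_pairLIntegral_exp_le hs ν μ)

theorem one_sub_exp_neg_nonneg {s : ℝ} (hs : 0 ≤ s) : 0 ≤ 1 - exp (-s) :=
  sub_nonneg.2 (exp_le_one_iff.2 (neg_nonpos.2 hs))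

theorem integrableOn_one_sub_exp_neg_mul_rpow {γ : ℝ} (hγ : 0 < γ) (hγ1 : γ < 1) {r : ℝ}
    (hr : 0 ≤ r) : IntegrableOn (fun s : ℝ => (1 - exp (-(r * s))) * s ^ (-1 - γ)) (Ioi 0) := by
  have hmeas : AEStronglyMeasurable (fun s : ℝ => (1 - exp (-(r * s))) * s ^ (-1 - γ)) volume :=
    (by fun_prop : Measurable fun s : ℝ => (1 - exp (-(r * s))) * s ^ (-1 - γ)).aestronglyMeasurable
  have hnorm : ∀ s : ℝ, 0 < s →
      ‖(1 - exp (-(r * s))) * s ^ (-1 - γ)‖ = (1 - exp (-(r * s))) * s ^ (-1 - γ) := fun s hs =>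
    Real.norm_of_nonneg (mul_nonneg (one_sub_exp_neg_nonneg (by positivity)) (by positivity))
  rw [← Ioc_union_Ioi_eq_Ioi zero_le_one]
  refine IntegrableOn.union ?_ ?_
  · have hdom : IntegrableOn (fun s : ℝ => r * s ^ (-γ)) (Ioc 0 1) :=
      ((intervalIntegrable_iff_integrableOn_Ioc_of_le zero_le_one).1
        (intervalIntegral.intervalIntegrable_rpow' (r := -γ) (by linarith))).const_mul r
    refine hdom.mono' hmeas.restrict ((ae_restrict_iff' measurableSet_Ioc).2 <|
      Filter.Eventually.of_forall fun s ⟨hs, _⟩ => ?_)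
    rw [hnorm s hs]
    calc (1 - exp (-(r * s))) * s ^ (-1 - γ) ≤ r * s * s ^ (-1 - γ) := by
          gcongr; linarith [add_one_le_exp (-(r * s))]
      _ = r * s ^ (-γ) := by rw [show -γ = 1 + (-1 - γ) by ring, rpow_add hs, rpow_one]; ring
  · refine (integrableOn_Ioi_rpow_of_lt (a := -1 - γ) (by linarith) one_pos).mono'
      hmeas.restrict ((ae_restrict_iff' measurableSet_Ioi).2 <|
        Filter.Eventually.of_forall fun s hs => ?_)
    rw [hnorm s (one_pos.trans hs)]
    have : (0 : ℝ) ≤ s ^ (-1 - γ) := rpow_nonneg (zero_le_one.trans hs.le) _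
    nlinarith [exp_pos (-(r * s))]

noncomputable def subordinationConst (γ : ℝ) : ℝ := ∫ s in Ioi 0, (1 - exp (-s)) * s ^ (-1 - γ)

theorem subordinationConst_pos {γ : ℝ} (hγ : 0 < γ) (hγ1 : γ < 1) : 0 < subordinationConst γ := by
  rw [subordinationConst, setIntegral_pos_iff_support_of_nonneg_ae _
    (by simpa using integrableOn_one_sub_exp_neg_mul_rpow hγ hγ1 zero_le_one)]
  · have hsub : Ioi (0 : ℝ) ⊆ support (fun s : ℝ => (1 - exp (-s)) * s ^ (-1 - γ)) ∩ Ioi 0 :=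
      fun s (hs : 0 < s) => ⟨(mul_pos (by linarith [exp_lt_one_iff.2 (neg_lt_zero.2 hs)])
        (rpow_pos_of_pos hs _)).ne', hs⟩
    exact (measure_mono hsub).trans_lt' (by simp)
  · exact (ae_restrict_iff' measurableSet_Ioi).2 <| Filter.Eventually.of_forall fun s hs =>
      mul_nonneg (one_sub_exp_neg_nonneg (le_of_lt hs)) (rpow_nonneg (le_of_lt hs) _)

theorem integral_one_sub_exp_neg_mul_rpow (γ : ℝ) {r : ℝ} (hr : 0 < r) :
    ∫ s in Ioi 0, (1 - exp (-(r * s))) * s ^ (-1 - γ) = r ^ γ * subordinationConst γ := by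
  have hscale := integral_comp_mul_left_Ioi (fun u => (1 - exp (-u)) * u ^ (-1 - γ)) 0 hr
  rw [mul_zero, smul_eq_mul] at hscale
  have hpt : ∀ s ∈ Ioi (0 : ℝ), (1 - exp (-(r * s))) * s ^ (-1 - γ) =
      r ^ (1 + γ) * ((1 - exp (-(r * s))) * (r * s) ^ (-1 - γ)) := fun s (hs : 0 < s) => by
    rw [mul_rpow hr.le hs.le, mul_left_comm (r ^ (1 + γ)), ← mul_assoc (r ^ (1 + γ)),
      ← rpow_add hr]
    norm_num
  rw [setIntegral_congr_fun measurableSet_Ioi hpt, integral_const_mul, hscale, subordinationConst,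
    ← mul_assoc, ← rpow_neg_one, ← rpow_add hr]
  norm_num

theorem lintegral_rpow_mul_one_sub_exp_neg_mul {γ : ℝ} (hγ : 0 < γ) (hγ1 : γ < 1) {r : ℝ}
    (hr : 0 ≤ r) :
    ∫⁻ s in Ioi 0, ENNReal.ofReal (s ^ (-1 - γ)) * ENNReal.ofReal (1 - exp (-(s * r))) =
      ENNReal.ofReal (r ^ γ) * ENNReal.ofReal (subordinationConst γ) := by
  rcases hr.eq_or_lt with rfl | hr
  · simp [zero_rpow hγ.ne']
  rw [← ENNReal.ofReal_mul (rpow_nonneg hr.le _), ← integral_one_sub_exp_neg_mul_rpow γ hr,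
    ofReal_integral_eq_lintegral_ofReal (integrableOn_one_sub_exp_neg_mul_rpow hγ hγ1 hr.le)]
  · refine setLIntegral_congr_fun measurableSet_Ioi fun s (hs : 0 < s) => ?_
    rw [← ENNReal.ofReal_mul (rpow_nonneg hs.le _), mul_comm s r, mul_comm]
  · exact (ae_restrict_iff' measurableSet_Ioi).2 <| .of_forall fun s (hs : 0 < s) =>
      mul_nonneg (one_sub_exp_neg_nonneg (by positivity)) (rpow_nonneg hs.le _)

noncomputable def rieszEnergy (γ : ℝ) (ν μ : Measure ℝ) : ℝ≥0∞ :=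
  pairLIntegral (fun x y => ENNReal.ofReal (|x - y| ^ γ)) ν μ

theorem rieszEnergy_mul_subordinationConst {γ : ℝ} (hγ : 0 < γ) (hγ1 : γ < 1)
    (ν μ : Measure ℝ) [SFinite ν] [SFinite μ] :
    rieszEnergy γ ν μ * ENNReal.ofReal (subordinationConst γ) =
      ∫⁻ s in Ioi 0, ENNReal.ofReal (s ^ (-1 - γ)) *
        pairLIntegral (fun x y => ENNReal.ofReal (1 - exp (-(s * |x - y|)))) ν μ := by
  rw [rieszEnergy, pairLIntegral_mul_const _ ENNReal.ofReal_ne_top]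
  simp_rw [← lintegral_rpow_mul_one_sub_exp_neg_mul hγ hγ1 (abs_nonneg _)]
  rw [pairLIntegral_lintegral (by fun_prop) _ ν μ]
  simp_rw [pairLIntegral_const_mul _ ENNReal.ofReal_ne_top]

theorem rieszEnergy_add_le {γ : ℝ} (hγ : 0 < γ) (hγ1 : γ < 1) (ν μ : Measure ℝ)
    [IsProbabilityMeasure ν] [IsProbabilityMeasure μ] :
    rieszEnergy γ ν ν + rieszEnergy γ μ μ ≤ 2 * rieszEnergy γ ν μ := by
  have hC : ENNReal.ofReal (subordinationConst γ) ≠ 0 :=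
    (ENNReal.ofReal_pos.2 (subordinationConst_pos hγ hγ1)).ne'
  have hmeas : ∀ (ρ₁ ρ₂ : Measure ℝ) [SFinite ρ₁] [SFinite ρ₂], Measurable fun s : ℝ =>
      ENNReal.ofReal (s ^ (-1 - γ)) *
        pairLIntegral (fun x y => ENNReal.ofReal (1 - exp (-(s * |x - y|)))) ρ₁ ρ₂ :=
    fun ρ₁ ρ₂ _ _ => (by fun_prop : Measurable fun s : ℝ => ENNReal.ofReal (s ^ (-1 - γ))).mul
      (measurable_pairLIntegral (by fun_prop) ρ₁ ρ₂)
  rw [← ENNReal.mul_le_mul_iff_left hC ENNReal.ofReal_ne_top, add_mul, mul_assoc,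
    rieszEnergy_mul_subordinationConst hγ hγ1, rieszEnergy_mul_subordinationConst hγ hγ1,
    rieszEnergy_mul_subordinationConst hγ hγ1, ← lintegral_add_left (hmeas ν ν),
    ← lintegral_const_mul _ (hmeas ν μ)]
  refine setLIntegral_mono' measurableSet_Ioi fun s (hs : 0 < s) => ?_
  rw [← mul_add, mul_left_comm]
  gcongr
  exact pairLIntegral_one_sub_exp_add_le hs.le ν μ

theorem lintegral_rpow_abs_sub_le_one {γ : ℝ} (hγ : 0 ≤ γ) {ρ : Measure ℝ}
    [IsProbabilityMeasure ρ] (hρ : ∀ᵐ y ∂ρ, y ∈ Icc (0 : ℝ) 1) {x : ℝ} (hx : x ∈ Icc (0 : ℝ) 1) :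
    ∫⁻ y, ENNReal.ofReal (|x - y| ^ γ) ∂ρ ≤ 1 :=
  calc ∫⁻ y, ENNReal.ofReal (|x - y| ^ γ) ∂ρ ≤ ∫⁻ _, 1 ∂ρ :=
        lintegral_mono_ae <| hρ.mono fun y hy => ENNReal.ofReal_le_one.2 <|
          rpow_le_one (abs_nonneg _)
            (abs_le.2 ⟨by linarith [hx.1, hy.2], by linarith [hx.2, hy.1]⟩) hγ
    _ = 1 := by simp

theorem integral_integral_rpow_abs_sub_eq_toReal {γ : ℝ} (hγ : 0 ≤ γ) (ρ : Measure ℝ)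
    [IsProbabilityMeasure ρ] (hρ : ∀ᵐ x ∂ρ, x ∈ Icc (0 : ℝ) 1) :
    ∫ x, ∫ y, |x - y| ^ γ ∂ρ ∂ρ = (rieszEnergy γ ρ ρ).toReal :=
  integral_integral_eq_toReal_pairLIntegral (by fun_prop) (fun _ _ => by positivity) <|
    hρ.mono fun x hx => (lintegral_rpow_abs_sub_le_one hγ hρ hx).trans_lt ENNReal.one_lt_top

theorem rieszEnergy_eq_of_forall_integral_eq {γ K : ℝ} (hγ : 0 ≤ γ) {μ : Measure ℝ}
    [IsProbabilityMeasure μ] (hμ : ∀ᵐ y ∂μ, y ∈ Icc (0 : ℝ) 1)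
    (hK : ∀ c ∈ Icc (0 : ℝ) 1, ∫ y, |y - c| ^ γ ∂μ = K) (ρ : Measure ℝ)
    [IsProbabilityMeasure ρ] (hρ : ∀ᵐ x ∂ρ, x ∈ Icc (0 : ℝ) 1) :
    rieszEnergy γ ρ μ = ENNReal.ofReal K := by
  have hinner : ∀ x ∈ Icc (0 : ℝ) 1,
      ∫⁻ y, ENNReal.ofReal (|x - y| ^ γ) ∂μ = ENNReal.ofReal K := by
    intro x hx
    rw [← hK x hx, ← ENNReal.ofReal_toReal
      ((lintegral_rpow_abs_sub_le_one hγ hμ hx).trans_lt ENNReal.one_lt_top).ne,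
      ← integral_eq_lintegral_of_nonneg_ae (Filter.Eventually.of_forall fun y => by positivity)
        (by fun_prop)]
    simp_rw [abs_sub_comm x]
  rw [rieszEnergy, pairLIntegral, lintegral_congr_ae (hρ.mono hinner), lintegral_const,
    measure_univ, mul_one]

end RieszEnergy

open RieszEnergy in
/-- Let `0 < γ < 1` and let `μ` be a Borel probability measure on
`[0,1]` such that `c ↦ ∫ |x-c|^γ dμ(x)` is constant on `[0,1]`.  Then `μ` maximizes
`∫∫ |x-x'|^γ dν dν` over all Borel probability measures `ν` on `[0,1]`. -/
theorem stmt16 (γ : ℝ) (hγ : 0 < γ) (hγ1 : γ < 1)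
    (μ : Measure ℝ) [IsProbabilityMeasure μ] (hsupp : μ (Set.Icc (0 : ℝ) 1)ᶜ = 0)
    (hconst : ∃ K : ℝ, ∀ c ∈ Set.Icc (0 : ℝ) 1, (∫ x, |x - c| ^ γ ∂μ) = K) :
    ∀ ν : Measure ℝ, IsProbabilityMeasure ν → ν (Set.Icc (0 : ℝ) 1)ᶜ = 0 →
      (∫ x, ∫ y, |x - y| ^ γ ∂ν ∂ν) ≤ ∫ x, ∫ y, |x - y| ^ γ ∂μ ∂μ := by
  obtain ⟨K, hK⟩ := hconst
  intro ν _ hνsupp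
  have hμ : ∀ᵐ x ∂μ, x ∈ Icc (0 : ℝ) 1 := mem_ae_iff.2 hsupp
  have hν : ∀ᵐ x ∂ν, x ∈ Icc (0 : ℝ) 1 := mem_ae_iff.2 hνsupp
  have hμμ := rieszEnergy_eq_of_forall_integral_eq hγ.le hμ hK μ hμ
  have hνν : rieszEnergy γ ν ν ≤ ENNReal.ofReal K := by
    have h := rieszEnergy_add_le hγ hγ1 ν μ
    rw [hμμ, rieszEnergy_eq_of_forall_integral_eq hγ.le hμ hK ν hν, two_mul] at h
    exact (ENNReal.add_le_add_iff_right ENNReal.ofReal_ne_top).1 h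
  rw [integral_integral_rpow_abs_sub_eq_toReal hγ.le ν hν,
    integral_integral_rpow_abs_sub_eq_toReal hγ.le μ hμ, hμμ]
  exact ENNReal.toReal_mono ENNReal.ofReal_ne_top hνν
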